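/- arXiv:2106.06535 — 4 statements merged into one kernel-verified Lean document; each statement's English description precedes it below -/
import Mathlib

section
/- For every i = 1, …, r there exists a valuation ω of L extending ν such that ω(φ_i(α)) > 0. -/
open Polynomial

section Helpers

variable {K L : Type*} [Field K] [Field L] [Algebra K L]
variable {Γ₀ : Type*} [LinearOrderedCommGroupWithZero Γ₀]

/-- The Gauss valuation of a polynomial `P ∈ K[x]`, computed in the value group of a
valuation `w` on an extension `L` of `K`: multiplicatively it is the supremum of the
`w`-values of the coefficients (additively, the minimum of the valuations of the
coefficients). -/
noncomputable def gaussVal {Γ' : Type*} [LinearOrderedCommGroupWithZero Γ']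
    (w : Valuation L Γ') (P : K[X]) : Γ' :=
  (Finset.range (P.natDegree + 1)).sup'
    (Finset.nonempty_range_iff.mpr (Nat.succ_ne_zero _))
    fun n => w (algebraMap K L (P.coeff n))

/-- `σ` is the smallest positive element of the value group of `v`: multiplicatively,
`σ` is the greatest element `< 1` among the nonzero values of `v`. -/
def IsMinPosValue (v : Valuation K Γ₀) (σ : Γ₀) : Prop :=
  IsGreatest {γ : Γ₀ | γ ≠ 0 ∧ γ < 1 ∧ ∃ x : K, v x = γ} σ

/-- The set of valuation subrings of `L` whose corresponding valuation extends `v`,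
i.e. those lying over the valuation ring of `v`. (Valuations of `L` up to equivalence
are the same thing as valuation subrings of `L`.) -/
def valuationExtensions (v : Valuation K Γ₀) : Set (ValuationSubring L) :=
  {O | O.comap (algebraMap K L) = v.valuationSubring}

end Helpers

/-!
The ideal `I = (𝔪_ν, φᵢ)` of `𝒪_ν[X]`, the kernel of reduction to `k_ν[X]/(φ̄ᵢ)`, is proper and
contains `f` because `φ̄ᵢ ∣ f̄`. By Gauss's lemma `f` generates the kernel of evaluation at `α`, so
`I` stays proper in `𝒪_ν[α] ⊆ L`. A valuation ring of `L` dominating the localisation of `𝒪_ν[α]`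
at a maximal ideal containing `I` then contains `𝒪_ν` and makes both `𝔪_ν` and `φᵢ(α)` nonunits;
the first two facts force it to lie over `𝒪_ν`.
-/

namespace ValuationSubring

variable {K L : Type*} [Field K] [Field L]

theorem mem_comap_nonunits {B : ValuationSubring L} {g : K →+* L} {x : K} :
    x ∈ (B.comap g).nonunits ↔ g x ∈ B.nonunits := by
  simp only [mem_nonunits_iff_or, mem_comap, map_inv₀, map_eq_zero]

theorem comap_eq_of_le_comap {A : ValuationSubring K} {B : ValuationSubring L} {g : K →+* L}
    (hle : A ≤ B.comap g) (hnonunits : g '' A.nonunits ⊆ B.nonunits) : B.comap g = A :=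
  le_antisymm (nonunits_le_nonunits.mp fun x hx ↦ mem_comap_nonunits.mpr <| hnonunits ⟨x, hx, rfl⟩)
    hle

end ValuationSubring

theorem Ideal.image_subset_nonunits_valuationSubring_of_ker_le {A L : Type*} [CommRing A]
    [Field L] (ψ : A →+* L) {I : Ideal A} (hI : I ≠ ⊤) (hker : RingHom.ker ψ ≤ I) :
    ∃ B : ValuationSubring L, ψ.range ≤ B.toSubring ∧ ψ '' I ⊆ B.nonunits := by
  have hJ : I.map ψ.rangeRestrict ≠ ⊤ := by
    rw [Ne, ← Ideal.comap_eq_top_iff (f := ψ.rangeRestrict),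
      Ideal.comap_map_of_surjective _ ψ.rangeRestrict_surjective, ← RingHom.ker_eq_comap_bot,
      RingHom.ker_rangeRestrict, sup_eq_left.mpr hker]
    exact hI
  obtain ⟨B, hrange, hnonunits⟩ := Ideal.image_subset_nonunits_valuationSubring _ hJ
  exact ⟨B, hrange, fun _ ⟨a, ha, hψa⟩ ↦ hnonunits ⟨_, Ideal.mem_map_of_mem _ ha, hψa⟩⟩

theorem Polynomial.Monic.dvd_of_aeval_eq_zero {R K L : Type*} [CommRing R] [Field K] [CommRing L]
    [Nontrivial L] [Algebra R K] [Algebra K L] [Algebra R L] [IsScalarTower R K L]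
    (hinj : Function.Injective (algebraMap R K)) {f : R[X]} (hf : f.Monic)
    (hirr : Irreducible (f.map (algebraMap R K))) {α : L} (hα : aeval α f = 0) {P : R[X]}
    (hP : aeval α P = 0) : f ∣ P := by
  have hmin : f.map (algebraMap R K) = minpoly K α :=
    minpoly.eq_of_irreducible_of_monic hirr (by rwa [aeval_map_algebraMap]) (hf.map _)
  rw [← map_dvd_map _ hinj hf, hmin]
  exact minpoly.dvd K α (by rwa [aeval_map_algebraMap])

theorem stmt_3_general
    {K L : Type*} [Field K] [Field L] [Algebra K L]
    {Γ₀ : Type*} [LinearOrderedCommGroupWithZero Γ₀]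
    (v : Valuation K Γ₀)
    [Algebra ↥v.valuationSubring L] [IsScalarTower (↥v.valuationSubring) K L]
    (f : Polynomial ↥v.valuationSubring) (hfmonic : f.Monic)
    (hfirr : Irreducible (f.map (algebraMap (↥v.valuationSubring) K)))
    (α : L) (hαroot : Polynomial.aeval α f = 0)
    (r : ℕ) (l : Fin r → ℕ) (hl : ∀ i, 1 ≤ l i)
    (φ : Fin r → Polynomial ↥v.valuationSubring)
    (hφirr : ∀ i, Irreducible ((φ i).map (IsLocalRing.residue ↥v.valuationSubring)))
    (hfbar : f.map (IsLocalRing.residue ↥v.valuationSubring) =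
      ∏ i, ((φ i).map (IsLocalRing.residue ↥v.valuationSubring)) ^ (l i)) :
    ∀ i, ∃ O : ValuationSubring L,
      O ∈ valuationExtensions (L := L) v ∧
      O.valuation (Polynomial.aeval α (φ i)) < 1 := by
  intro i
  -- the kernel of `𝒪_ν[X] → k_ν[X]/(φ̄ᵢ)`
  set I : Ideal (v.valuationSubring)[X] :=
    (Ideal.span {(φ i).map (IsLocalRing.residue _)}).comap (mapRingHom (IsLocalRing.residue _))
  have hI : I ≠ ⊤ := Ideal.comap_ne_top _ <| by
    simpa [Ideal.span_singleton_eq_top] using (hφirr i).not_isUnit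
  have hφI : φ i ∈ I := Ideal.subset_span rfl
  have hfI : f ∈ I := by
    simpa [I, Ideal.mem_span_singleton, hfbar] using
      (dvd_pow_self _ (Nat.one_le_iff_ne_zero.mp (hl i))).trans
        (Finset.dvd_prod_of_mem (fun j ↦ _ ^ l j) (Finset.mem_univ i))
  have hCI : ∀ a ∈ IsLocalRing.maximalIdeal _, C a ∈ I := fun a ha ↦ by
    simp [I, (IsLocalRing.residue_eq_zero_iff a).mpr ha]
  have hker : RingHom.ker (aeval α).toRingHom ≤ I := fun P hP ↦ by
    obtain ⟨Q, rfl⟩ := hfmonic.dvd_of_aeval_eq_zero Subtype.val_injective hfirr hαroot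
      (RingHom.mem_ker.mp hP)
    exact I.mul_mem_right Q hfI
  obtain ⟨B, hrange, hnonunits⟩ :=
    Ideal.image_subset_nonunits_valuationSubring_of_ker_le _ hI hker
  have hCB : ∀ a : v.valuationSubring, aeval α (C a) = algebraMap K L a := fun a ↦ by
    rw [aeval_C, IsScalarTower.algebraMap_apply _ K L]; rfl
  refine ⟨B, ValuationSubring.comap_eq_of_le_comap (fun x hx ↦ ?_) ?_, ?_⟩
  · rw [ValuationSubring.mem_comap, ← hCB ⟨x, hx⟩]
    exact hrange ⟨C ⟨x, hx⟩, rfl⟩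
  · rintro _ ⟨x, hx, rfl⟩
    obtain ⟨hxR, hxm⟩ := ValuationSubring.mem_nonunits_iff_exists_mem_maximalIdeal.mp hx
    exact hCB ⟨x, hxR⟩ ▸ hnonunits ⟨C ⟨x, hxR⟩, hCI _ hxm, rfl⟩
  · exact B.mem_nonunits_iff.mp (hnonunits ⟨φ i, hφI, rfl⟩)

/-- **Lemma 2.2 (i)**: for every `i = 1, …, r` there is a valuation `ω` of `L`
extending `ν` such that `ω(φᵢ(α)) > 0` (multiplicatively: `ω(φᵢ(α)) < 1`). -/
theorem stmt_3
    {K L : Type*} [Field K] [Field L] [Algebra K L]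
    {Γ₀ : Type*} [LinearOrderedCommGroupWithZero Γ₀]
    (v : Valuation K Γ₀)
    [Algebra ↥v.valuationSubring L] [IsScalarTower (↥v.valuationSubring) K L]
    (f : Polynomial ↥v.valuationSubring) (hfmonic : f.Monic)
    (hfirr : Irreducible (f.map (algebraMap (↥v.valuationSubring) K)))
    (α : L) (hαroot : Polynomial.aeval α f = 0)
    (hαgen : Algebra.adjoin K {α} = ⊤)
    (r : ℕ) (l : Fin r → ℕ) (hl : ∀ i, 1 ≤ l i)
    (φ : Fin r → Polynomial ↥v.valuationSubring)
    (hφmonic : ∀ i, (φ i).Monic)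
    (hφirr : ∀ i, Irreducible ((φ i).map (IsLocalRing.residue ↥v.valuationSubring)))
    (hφdist : ∀ i j, i ≠ j →
      (φ i).map (IsLocalRing.residue ↥v.valuationSubring) ≠
        (φ j).map (IsLocalRing.residue ↥v.valuationSubring))
    (hfbar : f.map (IsLocalRing.residue ↥v.valuationSubring) =
      ∏ i, ((φ i).map (IsLocalRing.residue ↥v.valuationSubring)) ^ (l i)) :
    ∀ i, ∃ O : ValuationSubring L,
      O ∈ valuationExtensions (L := L) v ∧
      O.valuation (Polynomial.aeval α (φ i)) < 1 :=
  stmt_3_general v f hfmonic hfirr α hαroot r l hl φ hφirr hfbar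
end

section
/- Let ω be a valuation of L extending ν with ω(φ_i(α)) > 0 for some i ∈ {1, …, r}, let P ∈ R_ν[x] be nonzero, and write P_0 = P/a where a ∈ K satisfies ν(a) = ν(P) (so ν(P_0) = 0 and P_0 ∈ R_ν[x]). Then ω(P(α)) = ν(P) if and only if φ̄_i does not divide P̄_0 in k_ν[x]. In particular, if deg(P) < deg(φ_i) then ω(P(α)) = ν(P). -/
open Polynomial

set_option maxHeartbeats 2000000 in
/-- **Lemma 2.2 (iii)**: let `ω` be a valuation of `L` extending `ν` with `ω(φᵢ(α)) > 0`
(multiplicatively `< 1`), let `P ∈ R_ν[x]` be nonzero and write `P = a·P₀` with `a ∈ K`,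
`ν(a) = ν(P)` and `ν(P₀) = 0` (multiplicatively, the Gauss value of `P₀` is `1`).
Then `ω(P(α)) = ν(P)` iff `φ̄ᵢ` does not divide `P̄₀` in `k_ν[x]`; in particular if
`deg P < deg φᵢ` then `ω(P(α)) = ν(P)`. -/
theorem stmt_5
    {K L : Type*} [Field K] [Field L] [Algebra K L]
    {Γ₀ : Type*} [LinearOrderedCommGroupWithZero Γ₀]
    (v : Valuation K Γ₀)
    [Algebra ↥v.valuationSubring L] [IsScalarTower (↥v.valuationSubring) K L]
    (f : Polynomial ↥v.valuationSubring) (hfmonic : f.Monic)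
    (hfirr : Irreducible (f.map (algebraMap (↥v.valuationSubring) K)))
    (α : L) (hαroot : Polynomial.aeval α f = 0)
    (hαgen : Algebra.adjoin K {α} = ⊤)
    (r : ℕ) (l : Fin r → ℕ) (hl : ∀ i, 1 ≤ l i)
    (φ : Fin r → Polynomial ↥v.valuationSubring)
    (hφmonic : ∀ i, (φ i).Monic)
    (hφirr : ∀ i, Irreducible ((φ i).map (IsLocalRing.residue ↥v.valuationSubring)))
    (hφdist : ∀ i j, i ≠ j →
      (φ i).map (IsLocalRing.residue ↥v.valuationSubring) ≠
        (φ j).map (IsLocalRing.residue ↥v.valuationSubring))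
    (hfbar : f.map (IsLocalRing.residue ↥v.valuationSubring) =
      ∏ i, ((φ i).map (IsLocalRing.residue ↥v.valuationSubring)) ^ (l i))
    {Γ' : Type*} [LinearOrderedCommGroupWithZero Γ'] (ω : Valuation L Γ')
    (hω : (ω.comap (algebraMap K L)).IsEquiv v)
    (i : Fin r) (hpos : ω (Polynomial.aeval α (φ i)) < 1)
    (P : Polynomial ↥v.valuationSubring) (hP : P ≠ 0)
    (a : K) (P₀ : Polynomial ↥v.valuationSubring)
    (haP : P.map (algebraMap (↥v.valuationSubring) K) =
      Polynomial.C a * (P₀.map (algebraMap (↥v.valuationSubring) K)))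
    (hP₀ : gaussVal v (P₀.map (algebraMap (↥v.valuationSubring) K)) = 1) :
    (ω (Polynomial.aeval α P) = gaussVal ω (P.map (algebraMap (↥v.valuationSubring) K)) ↔
      ¬ ((φ i).map (IsLocalRing.residue ↥v.valuationSubring) ∣
          P₀.map (IsLocalRing.residue ↥v.valuationSubring))) ∧
    (P.natDegree < (φ i).natDegree →
      ω (Polynomial.aeval α P) =
        gaussVal ω (P.map (algebraMap (↥v.valuationSubring) K)))     := by
  classical
  clear hαgen hfbar hφdist hl hfirr
  -- basic consequences of the equivalence hω
  have h_le1 : ∀ x : K, ω (algebraMap K L x) ≤ 1 ↔ v x ≤ 1 := by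
    intro x
    simpa [Valuation.comap_apply] using hω x 1
  have h_ge1 : ∀ x : K, 1 ≤ ω (algebraMap K L x) ↔ 1 ≤ v x := by
    intro x
    simpa [Valuation.comap_apply] using hω 1 x
  have h_eq1 : ∀ x : K, ω (algebraMap K L x) = 1 ↔ v x = 1 := by
    intro x
    rw [le_antisymm_iff, le_antisymm_iff, h_le1, h_ge1]
  have h_lt1 : ∀ x : K, ω (algebraMap K L x) < 1 ↔ v x < 1 := by
    intro x
    rw [lt_iff_le_not_ge, lt_iff_le_not_ge, h_le1, h_ge1]
  have h_ne0 : ∀ x : K, x ≠ 0 → ω (algebraMap K L x) ≠ 0 := by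
    intro x hx
    exact (Valuation.IsEquiv.ne_zero hω).mpr (v.ne_zero_iff.mpr hx)
  have halgRL : ∀ c : ↥v.valuationSubring, algebraMap ↥v.valuationSubring L c = algebraMap K L (algebraMap ↥v.valuationSubring K c) :=
    fun c => IsScalarTower.algebraMap_apply ↥v.valuationSubring K L c
  have hvR : ∀ c : ↥v.valuationSubring, v (algebraMap ↥v.valuationSubring K c) ≤ 1 := fun c => c.2
  have hωR : ∀ c : ↥v.valuationSubring, ω (algebraMap ↥v.valuationSubring L c) ≤ 1 := by
    intro c; rw [halgRL]; exact (h_le1 _).mpr (hvR c)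
  -- residue zero ↔ valuation < 1
  have hres0 : ∀ c : ↥v.valuationSubring, (IsLocalRing.residue ↥v.valuationSubring) c = 0 ↔ v (algebraMap ↥v.valuationSubring K c) < 1 := by
    intro c
    have h1 : (IsLocalRing.residue ↥v.valuationSubring) c = 0 ↔ c ∈ IsLocalRing.maximalIdeal ↥v.valuationSubring :=
      Ideal.Quotient.eq_zero_iff_mem
    rw [h1, ValuationSubring.valuation_lt_one_iff]
    exact Iff.symm
      ((Valuation.isEquiv_valuation_valuationSubring v).lt_one_iff_lt_one)
  -- α is integral, hence has value ≤ 1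
  have hα1 : ω α ≤ 1 := by
    have hmem : ∀ x : ↥v.valuationSubring, algebraMap ↥v.valuationSubring L x ∈ ω.integer := by
      intro x
      rw [Valuation.mem_integer_iff]
      exact hωR x
    set ρ : ↥v.valuationSubring →+* ω.integer := (algebraMap ↥v.valuationSubring L).codRestrict ω.integer hmem with hρ
    have hint : IsIntegral ω.integer α := by
      refine ⟨f.map ρ, hfmonic.map ρ, ?_⟩
      rw [eval₂_map]
      have hcomp : (algebraMap ω.integer L).comp ρ = algebraMap ↥v.valuationSubring L :=
        RingHom.ext fun x => rfl
      rw [hcomp]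
      exact hαroot
    exact Valuation.Integers.mem_of_integral (Valuation.integer.integers ω) hint
  -- evaluation bounds
  have hev_le : ∀ Q : Polynomial ↥v.valuationSubring, ω (Polynomial.aeval α Q) ≤ 1 := by
    intro Q
    rw [aeval_eq_sum_range]
    refine ω.map_sum_le fun n _ => ?_
    rw [Algebra.smul_def, map_mul, map_pow]
    exact mul_le_one' (hωR _) (pow_le_one' hα1 n)
  have hev_lt : ∀ Q : Polynomial ↥v.valuationSubring, Q.map (IsLocalRing.residue ↥v.valuationSubring) = 0 → ω (Polynomial.aeval α Q) < 1 := by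
    intro Q hQ
    rw [aeval_eq_sum_range]
    refine ω.map_sum_lt one_ne_zero fun n _ => ?_
    rw [Algebra.smul_def, map_mul, map_pow]
    have hc : (IsLocalRing.residue ↥v.valuationSubring) (Q.coeff n) = 0 := by
      have := congrArg (fun q => Polynomial.coeff q n) hQ
      simpa [Polynomial.coeff_map] using this
    have h1 : ω (algebraMap ↥v.valuationSubring L (Q.coeff n)) < 1 := by
      rw [halgRL, h_lt1]
      exact (hres0 _).mp hc
    calc ω (algebraMap ↥v.valuationSubring L (Q.coeff n)) * ω α ^ n
        ≤ ω (algebraMap ↥v.valuationSubring L (Q.coeff n)) * 1 :=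
          mul_le_mul_right (pow_le_one' hα1 n) _
      _ = ω (algebraMap ↥v.valuationSubring L (Q.coeff n)) := mul_one _
      _ < 1 := h1
  -- the key equivalence for P₀
  have key : ω (Polynomial.aeval α P₀) = 1 ↔ ¬ ((φ i).map (IsLocalRing.residue ↥v.valuationSubring) ∣ P₀.map (IsLocalRing.residue ↥v.valuationSubring)) := by
    constructor
    · intro h hdvd
      obtain ⟨qbar, hq⟩ := hdvd
      obtain ⟨Q, hQ⟩ := Polynomial.map_surjective (IsLocalRing.residue ↥v.valuationSubring) Ideal.Quotient.mk_surjective qbar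
      have hM : (P₀ - φ i * Q).map (IsLocalRing.residue ↥v.valuationSubring) = 0 := by
        rw [Polynomial.map_sub, Polynomial.map_mul, hQ, ← hq, sub_self]
      have hMω := hev_lt _ hM
      have hsplit : Polynomial.aeval α P₀ =
          Polynomial.aeval α (φ i) * Polynomial.aeval α Q +
            Polynomial.aeval α (P₀ - φ i * Q) := by
        rw [map_sub, map_mul]; ring
      have hlt : ω (Polynomial.aeval α P₀) < 1 := by
        rw [hsplit]
        refine lt_of_le_of_lt (ω.map_add _ _) (max_lt ?_ hMω)
        calc ω (Polynomial.aeval α (φ i) * Polynomial.aeval α Q)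
            = ω (Polynomial.aeval α (φ i)) * ω (Polynomial.aeval α Q) := map_mul ω _ _
          _ ≤ ω (Polynomial.aeval α (φ i)) * 1 := mul_le_mul_right (hev_le Q) _
          _ = ω (Polynomial.aeval α (φ i)) := mul_one _
          _ < 1 := hpos
      exact absurd h (ne_of_lt hlt)
    · intro hnd
      have hcop : IsCoprime ((φ i).map (IsLocalRing.residue ↥v.valuationSubring)) (P₀.map (IsLocalRing.residue ↥v.valuationSubring)) :=
        (hφirr i).coprime_iff_not_dvd.mpr hnd
      obtain ⟨Abar, Bbar, hAB⟩ := hcop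
      obtain ⟨A, hA⟩ := Polynomial.map_surjective (IsLocalRing.residue ↥v.valuationSubring) Ideal.Quotient.mk_surjective Abar
      obtain ⟨B, hB⟩ := Polynomial.map_surjective (IsLocalRing.residue ↥v.valuationSubring) Ideal.Quotient.mk_surjective Bbar
      have hM : (A * φ i + B * P₀ - 1).map (IsLocalRing.residue ↥v.valuationSubring) = 0 := by
        rw [Polynomial.map_sub, Polynomial.map_add, Polynomial.map_mul, Polynomial.map_mul,
          Polynomial.map_one, hA, hB, hAB, sub_self]
      have hMω := hev_lt _ hM
      have hone : ω (Polynomial.aeval α (A * φ i + B * P₀)) = 1 := by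
        have hsplit : Polynomial.aeval α (A * φ i + B * P₀) =
            (1 : L) + Polynomial.aeval α (A * φ i + B * P₀ - 1) := by
          rw [map_sub, map_one]; ring
        rw [hsplit]
        have := Valuation.map_add_eq_of_lt_left ω (by simpa using hMω : ω (Polynomial.aeval α (A * φ i + B * P₀ - 1)) < ω (1 : L))
        rw [this, map_one]
      have hle' : (1 : Γ') ≤ max (ω (Polynomial.aeval α A) * ω (Polynomial.aeval α (φ i)))
          (ω (Polynomial.aeval α B) * ω (Polynomial.aeval α P₀)) := by
        have hsum : Polynomial.aeval α (A * φ i + B * P₀) =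
            Polynomial.aeval α A * Polynomial.aeval α (φ i) +
              Polynomial.aeval α B * Polynomial.aeval α P₀ := by
          rw [map_add, map_mul, map_mul]
        rw [← hone, hsum, ← map_mul ω, ← map_mul ω]
        exact ω.map_add _ _
      have hfirst : ω (Polynomial.aeval α A) * ω (Polynomial.aeval α (φ i)) < 1 := by
        calc ω (Polynomial.aeval α A) * ω (Polynomial.aeval α (φ i))
            ≤ 1 * ω (Polynomial.aeval α (φ i)) := mul_le_mul_left (hev_le A) _
          _ = ω (Polynomial.aeval α (φ i)) := one_mul _
          _ < 1 := hpos
      have h1le : (1 : Γ') ≤ ω (Polynomial.aeval α B) * ω (Polynomial.aeval α P₀) := by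
        rcases le_max_iff.mp hle' with h | h
        · exact absurd (lt_of_le_of_lt h hfirst) (lt_irrefl _)
        · exact h
      have h1le' : (1 : Γ') ≤ ω (Polynomial.aeval α P₀) := by
        calc (1 : Γ') ≤ ω (Polynomial.aeval α B) * ω (Polynomial.aeval α P₀) := h1le
          _ ≤ 1 * ω (Polynomial.aeval α P₀) := mul_le_mul_left (hev_le B) _
          _ = ω (Polynomial.aeval α P₀) := one_mul _
      exact le_antisymm (hev_le P₀) h1le'
  -- basic nonvanishing facts
  have hinj : Function.Injective (algebraMap ↥v.valuationSubring K) := fun x y h => Subtype.ext h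
  have hPmap : P.map (algebraMap ↥v.valuationSubring K) ≠ 0 := by
    intro h
    exact hP ((Polynomial.map_eq_zero_iff hinj).mp h)
  have ha0 : a ≠ 0 := by
    intro h
    rw [h, map_zero, zero_mul] at haP
    exact hPmap haP
  have hP₀map : P₀.map (algebraMap ↥v.valuationSubring K) ≠ 0 := by
    intro h
    rw [h, mul_zero] at haP
    exact hPmap haP
  -- the witness coefficient of P₀ with valuation one
  obtain ⟨n₀, hn₀mem, hn₀⟩ := Finset.exists_mem_eq_sup'
    (Finset.nonempty_range_iff.mpr (Nat.succ_ne_zero _))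
    (fun n => v (algebraMap K K ((P₀.map (algebraMap ↥v.valuationSubring K)).coeff n)))
  rw [gaussVal] at hP₀
  rw [hn₀] at hP₀
  have hn₀1 : v (algebraMap ↥v.valuationSubring K (P₀.coeff n₀)) = 1 := by
    simpa [Polynomial.coeff_map] using hP₀
  -- natDegree bookkeeping
  have hdeg₀ : (P.map (algebraMap ↥v.valuationSubring K)).natDegree = (P₀.map (algebraMap ↥v.valuationSubring K)).natDegree := by
    rw [haP, Polynomial.natDegree_C_mul ha0]
  have hdegP : (P.map (algebraMap ↥v.valuationSubring K)).natDegree = P.natDegree :=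
    Polynomial.natDegree_map_eq_of_injective hinj P
  have hdegP₀ : (P₀.map (algebraMap ↥v.valuationSubring K)).natDegree = P₀.natDegree :=
    Polynomial.natDegree_map_eq_of_injective hinj P₀
  -- Gauss value of P equals ω(a)
  have hg : gaussVal ω (P.map (algebraMap ↥v.valuationSubring K)) = ω (algebraMap K L a) := by
    rw [gaussVal]
    apply le_antisymm
    · refine Finset.sup'_le _ _ fun n _ => ?_
      rw [haP, Polynomial.coeff_C_mul, map_mul, map_mul]
      calc ω (algebraMap K L a) * ω (algebraMap K L ((P₀.map (algebraMap ↥v.valuationSubring K)).coeff n))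
          ≤ ω (algebraMap K L a) * 1 := by
            refine mul_le_mul_right ((h_le1 _).mpr ?_) _
            rw [Polynomial.coeff_map]
            exact hvR _
        _ = ω (algebraMap K L a) := mul_one _
    · have hmem : n₀ ∈ Finset.range ((P.map (algebraMap ↥v.valuationSubring K)).natDegree + 1) := by
        rw [hdeg₀]
        exact hn₀mem
      refine le_trans (le_of_eq ?_) (Finset.le_sup' _ hmem)
      rw [haP, Polynomial.coeff_C_mul, map_mul, map_mul]
      have : ω (algebraMap K L ((P₀.map (algebraMap ↥v.valuationSubring K)).coeff n₀)) = 1 := by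
        rw [h_eq1, Polynomial.coeff_map]
        exact hn₀1
      rw [this, mul_one]
  -- value of P at α
  have hval : ω (Polynomial.aeval α P) = ω (algebraMap K L a) * ω (Polynomial.aeval α P₀) := by
    have h1 : Polynomial.aeval α P = Polynomial.aeval α (P.map (algebraMap ↥v.valuationSubring K)) :=
      (Polynomial.aeval_map_algebraMap K α P).symm
    have h2 : Polynomial.aeval α P₀ = Polynomial.aeval α (P₀.map (algebraMap ↥v.valuationSubring K)) :=
      (Polynomial.aeval_map_algebraMap K α P₀).symm
    rw [h1, h2, haP, map_mul, Polynomial.aeval_C, map_mul]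
  have hωa : ω (algebraMap K L a) ≠ 0 := h_ne0 a ha0
  have main : (ω (Polynomial.aeval α P) = gaussVal ω (P.map (algebraMap ↥v.valuationSubring K)) ↔
      ¬ ((φ i).map (IsLocalRing.residue ↥v.valuationSubring) ∣ P₀.map (IsLocalRing.residue ↥v.valuationSubring))) := by
    rw [hval, hg, mul_eq_left₀ hωa, key]
  refine ⟨main, fun hdeg => ?_⟩
  rw [main]
  intro hdvd
  have hbar0 : P₀.map (IsLocalRing.residue ↥v.valuationSubring) ≠ 0 := by
    intro h
    have hc : (IsLocalRing.residue ↥v.valuationSubring) (P₀.coeff n₀) = 0 := by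
      have := congrArg (fun q => Polynomial.coeff q n₀) h
      simpa [Polynomial.coeff_map] using this
    rw [hres0] at hc
    rw [hn₀1] at hc
    exact lt_irrefl _ hc
  have hd1 : ((φ i).map (IsLocalRing.residue ↥v.valuationSubring)).natDegree ≤ (P₀.map (IsLocalRing.residue ↥v.valuationSubring)).natDegree :=
    Polynomial.natDegree_le_of_dvd hdvd hbar0
  have hd2 : ((φ i).map (IsLocalRing.residue ↥v.valuationSubring)).natDegree = (φ i).natDegree :=
    (hφmonic i).natDegree_map (IsLocalRing.residue ↥v.valuationSubring)
  have hd3 : (P₀.map (IsLocalRing.residue ↥v.valuationSubring)).natDegree ≤ P₀.natDegree := Polynomial.natDegree_map_le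
  have : (φ i).natDegree ≤ P.natDegree := by
    rw [← hd2]
    refine le_trans hd1 (le_trans hd3 ?_)
    rw [← hdegP₀, ← hdeg₀, hdegP]
  exact absurd hdeg (not_lt.mpr this)
end

section
/- Suppose (K, ν) is a henselian valued field, f ∈ R_ν[x] is monic and irreducible over K with f̄ = φ̄^l for a monic polynomial φ ∈ R_ν[x] whose reduction φ̄ is irreducible in k_ν[x], and l ≥ 2. Let α be a root of f, L = K(α), and let ω be the unique valuation of L extending ν. If R_ν[α] is integrally closed, then the set Γ_ν^+ of positive elements of the value group has a smallest element σ, and ω(φ(α)) = σ/l (equivalently, l·ω(φ(α)) = σ). -/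
open Polynomial

/-!
Let `R = R_ν`, `M = M_ν` and `θ = ω(φ(α))`. Since `R[α]` is integral over the local ring `R`,
its maximal ideals lie over `M`; as `f̄ = φ̄^l`, a polynomial `P` with `φ̄ ∤ P̄` has `P̄` coprime
to `f̄`, so `P(α)` is a unit. Hence the non-units of `R[α]` lie in `M R[α] + φ(α) R[α]`, where
`ω < 1` (as `φ(α)^l = (φ^l - f)(α)` and `φ^l - f` has coefficients in `M`). An integrally closed `R[α]` with this property contains every `x` with `ω(x) ≤ 1`:
scale a polynomial killing `x` so that some coefficient `c_j` is `1`; its tails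
`c_k + c_{k+1} x + ⋯` lie in `R[x] ∩ R[x⁻¹]`, so are integral, and either one of them is a unit
of `R[α]`, whence `x ∈ R[α]`, or all have `ω < 1`, contradicting `c_j = 1`.

If `c ∈ M` and `i < l` had `θ^i ≤ ω(c)`, then `φ(α)^i / c ∈ R[α]` would give
`f ∣ φ^i - c P` in `R[X]`, so `φ̄^l ∣ φ̄^i`. Thus `ω(c) < θ^i` for `i < l`; with `i = 1` the
non-units of `R[α]` have `ω ≤ θ`, and applying this to `c / φ(α)^(l-1)` gives `ω(c) ≤ θ^l`.
Conversely `θ^l ≤ ω(c)` for one of the coefficients `c` of `φ^l - f`, which therefore has the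
least positive value.
-/

namespace Polynomial

variable {R : Type*}

theorem coeff_iterate_divX [Semiring R] (p : R[X]) (k n : ℕ) :
    (divX^[k] p).coeff n = p.coeff (n + k) := by
  induction k generalizing n with
  | zero => rfl
  | succ k ih => rw [Function.iterate_succ_apply', coeff_divX, ih, add_right_comm, add_assoc]

theorem iterate_divX_eq_X_mul_add [Semiring R] (p : R[X]) (k : ℕ) :
    divX^[k] p = X * divX^[k + 1] p + C (p.coeff k) := by
  conv_lhs => rw [← X_mul_divX_add (divX^[k] p)]
  rw [coeff_iterate_divX, zero_add, Function.iterate_succ_apply']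

theorem iterate_divX_mul_X_pow_add [CommSemiring R] (p : R[X]) (k : ℕ) :
    divX^[k] p * X ^ k + ∑ i ∈ Finset.range k, C (p.coeff i) * X ^ i = p := by
  induction k with
  | zero => simp
  | succ k ih =>
    conv_rhs => rw [← ih, iterate_divX_eq_X_mul_add p k]
    rw [Finset.sum_range_succ]
    ring

end Polynomial

section Integrality

variable {R L : Type*} [CommRing R] [Field L] [Algebra R L] {x : L}

theorem aeval_zpow_mul_zpow_mem_span (hx : x ≠ 0) (T : R[X]) {s e : ℤ} {I : Set ℤ}
    (hI : ∀ i ≤ T.natDegree, s * i + e ∈ I) :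
    aeval (x ^ s) T * x ^ e ∈ Submodule.span R ((x ^ ·) '' I) := by
  rw [aeval_eq_sum_range, Finset.sum_mul]
  refine Submodule.sum_mem _ fun i hi => ?_
  rw [smul_mul_assoc, ← zpow_natCast, ← zpow_mul, ← zpow_add₀ hx]
  exact Submodule.smul_mem _ _ <| Submodule.subset_span
    ⟨_, hI i (Nat.lt_succ_iff.mp (Finset.mem_range.mp hi)), rfl⟩

theorem isIntegral_of_mem_adjoin_of_mem_adjoin_inv (hx : x ≠ 0) {z : L}
    (h : z ∈ Algebra.adjoin R {x}) (h' : z ∈ Algebra.adjoin R {x⁻¹}) : IsIntegral R z := by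
  rw [Algebra.adjoin_singleton_eq_range_aeval] at h h'
  obtain ⟨P, rfl⟩ := h
  obtain ⟨Q, hQ⟩ := h'
  set N := Submodule.span R ((x ^ ·) '' Set.Icc (-(Q.natDegree : ℤ)) P.natDegree)
  have hNfg : N.FG := Submodule.fg_span ((Set.finite_Icc _ _).image _)
  have hN0 : N ≠ ⊥ := by
    intro h
    have h1 : (1 : L) ∈ N := Submodule.subset_span ⟨0, by simp, zpow_zero x⟩
    rw [h, Submodule.mem_bot] at h1
    exact one_ne_zero h1
  refine isIntegral_of_smul_mem_submodule N hN0 hNfg _ fun n hn => ?_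
  induction hn using Submodule.span_induction with
  | mem y hy =>
    obtain ⟨e, he, rfl⟩ := hy
    rw [Set.mem_Icc] at he
    rw [smul_eq_mul]
    rcases lt_or_ge e 0 with he0 | he0
    · simpa using aeval_zpow_mul_zpow_mem_span hx P (s := 1) fun i hi => by
        simp only [Set.mem_Icc]; omega
    · rw [← hQ, ← zpow_neg_one]
      exact aeval_zpow_mul_zpow_mem_span hx Q fun i hi => by simp only [Set.mem_Icc]; omega
  | zero => simp
  | add y w _ _ hy hw => rw [smul_add]; exact N.add_mem hy hw
  | smul a y _ hy => rw [smul_comm]; exact N.smul_mem a hy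

theorem aeval_iterate_divX_mem_adjoin_inv (hx : x ≠ 0) {p : R[X]} (hp : aeval x p = 0) (k : ℕ) :
    aeval x (divX^[k] p) ∈ Algebra.adjoin R {x⁻¹} := by
  have h := congrArg (aeval x) (iterate_divX_mul_X_pow_add p k)
  simp only [map_add, map_mul, map_pow, aeval_X, map_sum, aeval_C, hp] at h
  have : aeval x (divX^[k] p) =
      -∑ i ∈ Finset.range k, algebraMap R L (p.coeff i) * x⁻¹ ^ (k - i) := by
    rw [eq_neg_iff_add_eq_zero, ← mul_left_inj' (pow_ne_zero k hx), add_mul, Finset.sum_mul,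
      zero_mul, ← h]
    congr 1
    refine Finset.sum_congr rfl fun i hi => ?_
    rw [mul_assoc, inv_pow, ← pow_sub_mul_pow x (Finset.mem_range.mp hi).le,
      inv_mul_cancel_left₀ (pow_ne_zero _ hx)]
  rw [this]
  exact neg_mem <| Subalgebra.sum_mem _ fun i _ => Subalgebra.mul_mem _
    (Subalgebra.algebraMap_mem _ _) (Subalgebra.pow_mem _ (Algebra.self_mem_adjoin_singleton R _) _)

end Integrality

section Criterion

variable {R L Γ : Type*} [CommRing R] [Field L] [Algebra R L] [LinearOrderedCommGroupWithZero Γ]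

theorem mem_of_valuation_le_one {ω : Valuation L Γ} {S : Subalgebra R L}
    (hS : integralClosure R L ≤ S) (hloc : ∀ z ∈ S, 1 ≤ ω z → z⁻¹ ∈ S)
    {p : R[X]} {j : ℕ} (hj : p.coeff j = 1) {x : L} (hp : aeval x p = 0) (hx : ω x ≤ 1) :
    x ∈ S := by
  rcases eq_or_ne x 0 with rfl | hx0
  · exact S.zero_mem
  set s : ℕ → L := fun k => aeval x (divX^[k] p)
  have hsS (k : ℕ) : s k ∈ S := hS <| isIntegral_of_mem_adjoin_of_mem_adjoin_inv hx0
    (aeval_mem_adjoin_singleton R x) (aeval_iterate_divX_mem_adjoin_inv hx0 hp k)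
  have hs (k : ℕ) : s k = x * s (k + 1) + algebraMap R L (p.coeff k) := by
    simp only [s]
    conv_lhs => rw [iterate_divX_eq_X_mul_add p k]
    simp
  by_cases h : ∃ k, 1 ≤ ω (s (k + 1))
  · obtain ⟨k, hk⟩ := h
    have hsk : s (k + 1) ≠ 0 := ω.ne_zero_iff.mp (zero_lt_one.trans_le hk).ne'
    have hxs : x = (s (k + 1))⁻¹ * (s k - algebraMap R L (p.coeff k)) := by
      rw [hs k, add_sub_cancel_right, mul_comm, mul_inv_cancel_right₀ hsk]
    rw [hxs]
    exact S.mul_mem (hloc _ (hsS _) hk) (S.sub_mem (hsS k) (S.algebraMap_mem _))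
  · push Not at h
    have hlt : ∀ k, ω (s k) < 1
      | 0 => by simp [s, hp]
      | k + 1 => h k
    have h1 : (1 : L) = s j - x * s (j + 1) := by rw [hs j, hj]; simp
    have := (ω.map_sub _ _).trans_lt (max_lt (hlt j) ((ω.map_mul _ _).trans_lt
      ((mul_le_of_le_one_left' hx).trans_lt (hlt (j + 1)))))
    rw [← h1, map_one] at this
    exact absurd this (lt_irrefl 1)

end Criterion

namespace Valuation

section Integral

variable {R A Γ : Type*} [CommRing R] [CommRing A] [Algebra R A]
  [LinearOrderedCommGroupWithZero Γ]
  (w : Valuation A Γ)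

theorem map_le_one_of_isIntegral (hR : ∀ r : R, w (algebraMap R A r) ≤ 1) {x : A}
    (hx : IsIntegral R x) : w x ≤ 1 :=
  (integer.integers w).isIntegral_iff_v_le_one.mp <|
    hx.map_of_comp_eq ((algebraMap R A).codRestrict w.integer hR) (RingHom.id A) rfl

theorem map_le_one_of_mem_adjoin (hR : ∀ r : R, w (algebraMap R A r) ≤ 1) {α : A}
    (hα : IsIntegral R α) {y : A} (hy : y ∈ Algebra.adjoin R {α}) : w y ≤ 1 :=
  w.map_le_one_of_isIntegral hR (IsIntegral.of_mem_of_fg _ hα.fg_adjoin_singleton _ hy)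

theorem exists_map_aeval_le_map_coeff {x : A} (hx : w x ≤ 1) (T : R[X]) :
    ∃ i, w (aeval x T) ≤ w (algebraMap R A (T.coeff i)) := by
  by_contra! h
  have h0 : w (aeval x T) ≠ 0 := fun h0 => by simpa [h0] using h 0
  refine lt_irrefl (w (aeval x T)) ?_
  nth_rewrite 1 [aeval_eq_sum_range]
  refine w.map_sum_lt h0 fun i _ => ?_
  rw [Algebra.smul_def, map_mul, map_pow]
  exact (mul_le_of_le_one_right' (pow_le_one' hx i)).trans_lt (h i)

end Integral

theorem exists_aeval_eq_zero_coeff_eq_one {K L Γ₀ : Type*} [Field K] [CommRing L] [Algebra K L]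
    [LinearOrderedCommGroupWithZero Γ₀] (v : Valuation K Γ₀) [Algebra v.valuationSubring L]
    [IsScalarTower v.valuationSubring K L] {x : L} (hx : IsAlgebraic K x) :
    ∃ p : v.valuationSubring[X], aeval x p = 0 ∧ ∃ j, p.coeff j = 1 := by
  obtain ⟨g, hg0, hgx⟩ := hx
  obtain ⟨j, hj, hmax⟩ := g.support.exists_max_image (fun i => v (g.coeff i))
    (support_nonempty.mpr hg0)
  have hb : g.coeff j ≠ 0 := mem_support_iff.mp hj
  have hlifts : C (g.coeff j)⁻¹ * g ∈ lifts (algebraMap v.valuationSubring K) := by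
    refine (lifts_iff_coeff_lifts _).mpr fun n =>
      ⟨⟨(C (g.coeff j)⁻¹ * g).coeff n, ?_⟩, rfl⟩
    rw [mem_valuationSubring_iff, coeff_C_mul, map_mul, map_inv₀]
    by_cases hn : n ∈ g.support
    · exact inv_mul_le_one_of_le₀ (hmax n hn) zero_le
    · simp [notMem_support_iff.mp hn]
  obtain ⟨p, hp : p.map _ = _⟩ := hlifts
  refine ⟨p, ?_, j, Subtype.ext ?_⟩
  · rw [← aeval_map_algebraMap K, hp, map_mul, aeval_C, hgx, mul_zero]
  · simpa [hb] using congrArg (coeff · j) hp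

end Valuation

section LocalAlgebra

open IsLocalRing

variable {R A : Type*} [CommRing R] [IsLocalRing R] [CommRing A] [Algebra R A]

theorem Polynomial.coeff_mem_maximalIdeal_of_map_residue_eq_zero {T : R[X]}
    (hT : T.map (residue R) = 0) (i : ℕ) : T.coeff i ∈ maximalIdeal R := by
  rw [← residue_eq_zero_iff, ← coeff_map, hT, coeff_zero]

theorem Polynomial.aeval_mem_map_maximalIdeal {T : R[X]} (hT : T.map (residue R) = 0) (α : A) :
    aeval α T ∈ (maximalIdeal R).map (algebraMap R A) := by
  have hT' : T ∈ (maximalIdeal R).map C := by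
    rw [← ker_residue, ← ker_mapRingHom]
    exact hT
  have := Ideal.mem_map_of_mem ((aeval α : R[X] →ₐ[R] A) : R[X] →+* A) hT'
  rwa [Ideal.map_map, ← algebraMap_eq, AlgHom.comp_algebraMap] at this

theorem isUnit_aeval_of_isCoprime_map_residue [Algebra.IsIntegral R A] {f P : R[X]} {α : A}
    (hf : aeval α f = 0) (hfP : IsCoprime (f.map (residue R)) (P.map (residue R))) :
    IsUnit (aeval α P) := by
  obtain ⟨a', b', hab⟩ := hfP
  obtain ⟨a, rfl⟩ := map_surjective _ residue_surjective a'
  obtain ⟨b, rfl⟩ := map_surjective _ residue_surjective b'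
  have hT : aeval α b * aeval α P - 1 ∈ (maximalIdeal R).map (algebraMap R A) := by
    convert aeval_mem_map_maximalIdeal (T := a * f + b * P - 1) (by simp [hab]) α using 1
    simp [hf]
  by_contra hu
  obtain ⟨N, hN, hPN⟩ := exists_max_ideal_of_mem_nonunits hu
  have hMN : (maximalIdeal R).map (algebraMap R A) ≤ N :=
    Ideal.map_le_iff_le_comap.mpr
      (eq_maximalIdeal (Ideal.isMaximal_comap_of_isIntegral_of_isMaximal N)).ge
  have h1 : (1 : A) ∈ N := by
    simpa using N.sub_mem (N.mul_mem_left (aeval α b) hPN) (hMN hT)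
  exact hN.ne_top ((Ideal.eq_top_iff_one N).mpr h1)

end LocalAlgebra

section Corollary

open IsLocalRing

variable {R K L Γ : Type*} [CommRing R] [IsLocalRing R] [Field L] [Algebra R L]
  [LinearOrderedCommGroupWithZero Γ] {ω : Valuation L Γ} {f φ : R[X]} {α : L} {l : ℕ}

theorem inv_mem_adjoin_or_exists_valuation_le (hR : ∀ r : R, ω (algebraMap R L r) ≤ 1)
    (hf : f.Monic) (hfα : aeval α f = 0) (hφ : Irreducible (φ.map (residue R)))
    (hfφ : f.map (residue R) = φ.map (residue R) ^ l) {y : L} (hy : y ∈ Algebra.adjoin R {α}) :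
    y⁻¹ ∈ Algebra.adjoin R {α} ∨
      ∃ c ∈ maximalIdeal R, ω y ≤ max (ω (aeval α φ)) (ω (algebraMap R L c)) := by
  have hα : IsIntegral R α := ⟨f, hf, hfα⟩
  obtain ⟨P, rfl⟩ : ∃ P, aeval α P = y := by
    simpa [Algebra.adjoin_singleton_eq_range_aeval] using hy
  by_cases hdvd : φ.map (residue R) ∣ P.map (residue R)
  · right
    obtain ⟨D', hD'⟩ := hdvd
    obtain ⟨D, rfl⟩ := map_surjective _ residue_surjective D'
    have hT : (P - φ * D).map (residue R) = 0 := by simp [hD']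
    obtain ⟨i, hi⟩ := ω.exists_map_aeval_le_map_coeff
      (ω.map_le_one_of_mem_adjoin hR hα (Algebra.self_mem_adjoin_singleton R α)) (P - φ * D)
    refine ⟨_, coeff_mem_maximalIdeal_of_map_residue_eq_zero hT i, ?_⟩
    rw [show aeval α P = aeval α (P - φ * D) + aeval α φ * aeval α D by simp]
    refine (ω.map_add _ _).trans (max_le (hi.trans (le_max_right _ _)) ?_)
    rw [map_mul]
    exact (mul_le_of_le_one_right' (ω.map_le_one_of_mem_adjoin hR hα
      (aeval_mem_adjoin_singleton R α))).trans (le_max_left _ _)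
  · left
    have : Algebra.IsIntegral R (Algebra.adjoin R {α}) := Algebra.IsIntegral.adjoin (by simpa)
    obtain ⟨u, hu⟩ := isUnit_aeval_of_isCoprime_map_residue
      (α := ⟨α, Algebra.self_mem_adjoin_singleton R α⟩) (f := f) (Subtype.ext (by simpa using hfα))
      (hfφ ▸ (hφ.coprime_iff_not_dvd.mpr hdvd).pow_left)
    rw [show aeval α P = u by rw [hu, aeval_subalgebra_coe], inv_eq_of_mul_eq_one_right (by
      rw [← Subalgebra.coe_mul, u.mul_inv, Subalgebra.coe_one])]
    exact (↑u⁻¹ : Algebra.adjoin R {α}).2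

theorem aeval_pow_ne_algebraMap_mul [Field K] [Algebra R K] [FaithfulSMul R K] [Algebra K L]
    [IsScalarTower R K L] (hf : f.Monic) (hfirr : Irreducible (f.map (algebraMap R K)))
    (hfα : aeval α f = 0) (hφ : Irreducible (φ.map (residue R)))
    (hfφ : f.map (residue R) = φ.map (residue R) ^ l) {i : ℕ} (hi : i < l) {c : R}
    (hc : c ∈ maximalIdeal R) (P : R[X]) : aeval α φ ^ i ≠ algebraMap R L c * aeval α P := by
  intro h
  have hmin : f.map (algebraMap R K) = minpoly K α :=
    minpoly.eq_of_irreducible_of_monic hfirr (by rwa [aeval_map_algebraMap]) (hf.map _)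
  have hdvd : f ∣ φ ^ i - C c * P := by
    refine (map_dvd_map _ (FaithfulSMul.algebraMap_injective R K) hf).mp
      (hmin ▸ minpoly.dvd K α ?_)
    simp [h, ← IsScalarTower.algebraMap_apply]
  have := map_dvd (residue R) hdvd
  rw [hfφ, Polynomial.map_sub, Polynomial.map_mul, map_C, (residue_eq_zero_iff c).mpr hc, C_0,
    zero_mul, sub_zero, Polynomial.map_pow, pow_dvd_pow_iff hφ.ne_zero hφ.not_isUnit] at this
  omega

theorem valuation_algebraMap_lt_pow [Field K] [Algebra R K] [FaithfulSMul R K] [Algebra K L]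
    [IsScalarTower R K L] (hO : ∀ x, ω x ≤ 1 → x ∈ Algebra.adjoin R {α}) (hf : f.Monic)
    (hfirr : Irreducible (f.map (algebraMap R K))) (hfα : aeval α f = 0)
    (hφ : Irreducible (φ.map (residue R))) (hfφ : f.map (residue R) = φ.map (residue R) ^ l)
    {i : ℕ} (hi : i < l) {c : R} (hc : c ∈ maximalIdeal R) :
    ω (algebraMap R L c) < ω (aeval α φ) ^ i := by
  by_contra! h
  have key : aeval α φ ^ i = algebraMap R L c * (aeval α φ ^ i / algebraMap R L c) := by
    rcases eq_or_ne (algebraMap R L c) 0 with hc0 | hc0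
    · simpa [hc0] using h
    · field_simp
  have hle : ω (aeval α φ ^ i / algebraMap R L c) ≤ 1 := by
    rw [map_div₀, map_pow]
    exact div_le_one_of_le₀ h zero_le
  obtain ⟨P, hP⟩ : ∃ P, aeval α P = aeval α φ ^ i / algebraMap R L c := by
    simpa [Algebra.adjoin_singleton_eq_range_aeval] using hO _ hle
  exact aeval_pow_ne_algebraMap_mul hf hfirr hfα hφ hfφ hi hc P (hP ▸ key)

theorem valuation_algebraMap_le_pow [Field K] [Algebra R K] [FaithfulSMul R K] [Algebra K L]
    [IsScalarTower R K L] (hR : ∀ r : R, ω (algebraMap R L r) ≤ 1)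
    (hO : ∀ x, ω x ≤ 1 → x ∈ Algebra.adjoin R {α}) (hf : f.Monic)
    (hfirr : Irreducible (f.map (algebraMap R K))) (hfα : aeval α f = 0)
    (hφ : Irreducible (φ.map (residue R))) (hfφ : f.map (residue R) = φ.map (residue R) ^ l)
    (hl : 2 ≤ l) {c : R} (hc : c ∈ maximalIdeal R) :
    ω (algebraMap R L c) ≤ ω (aeval α φ) ^ l := by
  rcases eq_or_ne (algebraMap R L c) 0 with hc0 | hc0
  · simp [hc0]
  have hlt {i : ℕ} (hi : i < l) {d : R} (hd : d ∈ maximalIdeal R) :=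
    valuation_algebraMap_lt_pow hO hf hfirr hfα hφ hfφ hi hd
  have hθ : ω (aeval α φ) ^ (l - 1) ≠ 0 := (zero_le.trans_lt (hlt (by omega) hc)).ne'
  set y := algebraMap R L c / aeval α φ ^ (l - 1)
  have hy : ω y < 1 := by
    rw [map_div₀, map_pow]
    exact (div_lt_one₀ (zero_le.lt_of_ne' hθ)).mpr (hlt (by omega) hc)
  have hyθ : ω y ≤ ω (aeval α φ) := by
    rcases inv_mem_adjoin_or_exists_valuation_le hR hf hfα hφ hfφ (hO y hy.le) with
      hinv | ⟨d, hd, hyd⟩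
    · have := ω.map_le_one_of_mem_adjoin hR ⟨f, hf, hfα⟩ hinv
      rw [map_inv₀, inv_le_one₀ (zero_le.lt_of_ne' ((map_ne_zero ω).mpr
        (div_ne_zero hc0 (by simpa using hθ))))] at this
      exact absurd hy this.not_gt
    · simpa using hyd.trans (max_le le_rfl (pow_one (ω (aeval α φ)) ▸ hlt (by omega) hd).le)
  calc ω (algebraMap R L c) = ω y * ω (aeval α φ) ^ (l - 1) := by
        rw [map_div₀, map_pow, div_mul_cancel₀ _ hθ]
    _ ≤ ω (aeval α φ) * ω (aeval α φ) ^ (l - 1) := mul_le_mul_left hyθ _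
    _ = ω (aeval α φ) ^ l := by rw [← pow_succ', Nat.sub_add_cancel (by omega)]

theorem exists_mem_maximalIdeal_pow_le_valuation (hα : ω α ≤ 1) (hfα : aeval α f = 0)
    (hfφ : f.map (residue R) = φ.map (residue R) ^ l) :
    ∃ c ∈ maximalIdeal R, ω (aeval α φ) ^ l ≤ ω (algebraMap R L c) := by
  have hT : (φ ^ l - f).map (residue R) = 0 := by simp [hfφ]
  obtain ⟨i, hi⟩ := ω.exists_map_aeval_le_map_coeff hα (φ ^ l - f)
  refine ⟨_, coeff_mem_maximalIdeal_of_map_residue_eq_zero hT i, ?_⟩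
  simpa [hfα] using hi

end Corollary

section ValuedField

open IsLocalRing

variable {K L Γ₀ Γ : Type*} [Field K] [Field L] [Algebra K L]
  [LinearOrderedCommGroupWithZero Γ₀] [LinearOrderedCommGroupWithZero Γ]
  {v : Valuation K Γ₀} {ω : Valuation L Γ}
  [Algebra v.valuationSubring L] [IsScalarTower v.valuationSubring K L]

theorem valuation_algebraMap_le_one (hω : (ω.comap (algebraMap K L)).IsEquiv v)
    (r : v.valuationSubring) : ω (algebraMap v.valuationSubring L r) ≤ 1 := by
  rw [IsScalarTower.algebraMap_apply _ K L]
  exact hω.le_one_iff_le_one.mpr r.2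

theorem valuation_algebraMap_lt_one (hω : (ω.comap (algebraMap K L)).IsEquiv v)
    {r : v.valuationSubring} (hr : r ∈ maximalIdeal v.valuationSubring) :
    ω (algebraMap v.valuationSubring L r) < 1 := by
  rw [IsScalarTower.algebraMap_apply _ K L]
  exact hω.lt_one_iff_lt_one.mpr (v.mem_maximalIdeal_iff.mp hr)

theorem mem_adjoin_of_valuation_le_one [Algebra.IsAlgebraic K L]
    (hω : (ω.comap (algebraMap K L)).IsEquiv v) {f φ : v.valuationSubring[X]} {α : L} {l : ℕ}
    (hf : f.Monic) (hfα : aeval α f = 0) (hφ : Irreducible (φ.map (residue _)))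
    (hfφ : f.map (residue _) = φ.map (residue _) ^ l) (hθ : ω (aeval α φ) < 1)
    (hIC : integralClosure v.valuationSubring L ≤ Algebra.adjoin v.valuationSubring {α})
    {x : L} (hx : ω x ≤ 1) : x ∈ Algebra.adjoin v.valuationSubring {α} := by
  obtain ⟨p, hp, j, hj⟩ :=
    v.exists_aeval_eq_zero_coeff_eq_one (Algebra.IsAlgebraic.isAlgebraic (R := K) x)
  refine mem_of_valuation_le_one hIC (fun z hz h1 => ?_) hj hp hx
  refine (inv_mem_adjoin_or_exists_valuation_le (valuation_algebraMap_le_one hω) hf hfα hφ hfφ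
    hz).resolve_right ?_
  rintro ⟨c, hc, hzc⟩
  exact (h1.trans hzc).not_gt (max_lt hθ (valuation_algebraMap_lt_one hω hc))

theorem isMinPosValue_of_forall_valuation_le (hω : (ω.comap (algebraMap K L)).IsEquiv v)
    {c : v.valuationSubring} (hc0 : c ≠ 0) (hc : c ∈ maximalIdeal v.valuationSubring)
    (hmax : ∀ d ∈ maximalIdeal v.valuationSubring,
      ω (algebraMap v.valuationSubring L d) ≤ ω (algebraMap v.valuationSubring L c)) :
    IsMinPosValue v (v c) := by
  refine ⟨⟨v.ne_zero_iff.mpr (by exact_mod_cast hc0), v.mem_maximalIdeal_iff.mp hc, c,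
    rfl⟩, ?_⟩
  rintro _ ⟨-, hx, x, rfl⟩
  have := hmax ⟨x, hx.le⟩ (v.mem_maximalIdeal_iff.mpr hx)
  simp only [IsScalarTower.algebraMap_apply v.valuationSubring K L] at this
  exact hω.le_iff_le.mp this

end ValuedField

theorem stmt_7_general
    {K L : Type*} [Field K] [Field L] [Algebra K L]
    {Γ₀ : Type*} [LinearOrderedCommGroupWithZero Γ₀]
    (v : Valuation K Γ₀)
    [Algebra ↥v.valuationSubring L] [IsScalarTower (↥v.valuationSubring) K L]
    (f : Polynomial ↥v.valuationSubring) (hfmonic : f.Monic)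
    (hfirr : Irreducible (f.map (algebraMap (↥v.valuationSubring) K)))
    (φ : Polynomial ↥v.valuationSubring)
    (hφirr : Irreducible (φ.map (IsLocalRing.residue ↥v.valuationSubring)))
    (l : ℕ) (hl : 2 ≤ l)
    (hfbar : f.map (IsLocalRing.residue ↥v.valuationSubring) =
      (φ.map (IsLocalRing.residue ↥v.valuationSubring)) ^ l)
    (α : L) (hαroot : Polynomial.aeval α f = 0)
    (hαgen : Algebra.adjoin K {α} = ⊤)
    {Γ' : Type*} [LinearOrderedCommGroupWithZero Γ'] (ω : Valuation L Γ')
    (hω : (ω.comap (algebraMap K L)).IsEquiv v)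
    (hIC : Algebra.adjoin (↥v.valuationSubring) {α} =
      integralClosure (↥v.valuationSubring) L) :
    ∃ a : K, IsMinPosValue v (v a) ∧
      ω (Polynomial.aeval α φ) ^ l = ω (algebraMap K L a) := by
  have hR := valuation_algebraMap_le_one hω
  have hα : IsIntegral v.valuationSubring α := ⟨f, hfmonic, hαroot⟩
  obtain ⟨c, hcM, hθc⟩ := exists_mem_maximalIdeal_pow_le_valuation
    (ω.map_le_one_of_mem_adjoin hR hα (Algebra.self_mem_adjoin_singleton _ α)) hαroot hfbar
  have hθ : ω (aeval α φ) < 1 := (pow_lt_one_iff_of_nonneg zero_le (by omega)).mp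
    (hθc.trans_lt (valuation_algebraMap_lt_one hω hcM))
  have : Algebra.IsIntegral K L := integralClosure_eq_top_iff.mp <| top_le_iff.mp <|
    hαgen ▸ Algebra.adjoin_le (Set.singleton_subset_iff.mpr hα.tower_top)
  have hO (x : L) (hx : ω x ≤ 1) :=
    mem_adjoin_of_valuation_le_one hω hfmonic hαroot hφirr hfbar hθ hIC.ge hx
  have hle {d} (hd : d ∈ IsLocalRing.maximalIdeal v.valuationSubring) :=
    valuation_algebraMap_le_pow hR hO hfmonic hfirr hαroot hφirr hfbar hl hd
  have hθ0 : 0 < ω (aeval α φ) := by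
    simpa using valuation_algebraMap_lt_pow hO hfmonic hfirr hαroot hφirr hfbar (i := 1)
      (by omega) (zero_mem _)
  have hcθ : ω (algebraMap _ L c) = ω (aeval α φ) ^ l := (hle hcM).antisymm hθc
  refine ⟨c, isMinPosValue_of_forall_valuation_le hω ?_ hcM fun d hd => hcθ ▸ hle hd, ?_⟩
  · rintro rfl
    exact (pow_pos hθ0 l).ne' (by simpa using hcθ.symm)
  · rw [← hcθ, IsScalarTower.algebraMap_apply _ K L]
    rfl

/-- **Corollary 2.4**: suppose `(K, ν)` is henselian, `f ∈ R_ν[x]` monic irreducible over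
`K` with `f̄ = φ̄^l`, `φ̄` irreducible over `k_ν` and `l ≥ 2`.  Let `α` be a root of `f`,
`L = K(α)`, and `ω` the (unique) valuation of `L` extending `ν`.  If `R_ν[α]` is
integrally closed then `Γ_ν⁺` has a smallest element `σ` and `ω(φ(α)) = σ / l`
(multiplicatively: `ω(φ(α))^l` equals (the image in `Γ_ω` of) `σ`). -/
theorem stmt_7
    {K L : Type*} [Field K] [Field L] [Algebra K L]
    {Γ₀ : Type*} [LinearOrderedCommGroupWithZero Γ₀]
    (v : Valuation K Γ₀) [HenselianLocalRing ↥v.valuationSubring]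
    [Algebra ↥v.valuationSubring L] [IsScalarTower (↥v.valuationSubring) K L]
    (f : Polynomial ↥v.valuationSubring) (hfmonic : f.Monic)
    (hfirr : Irreducible (f.map (algebraMap (↥v.valuationSubring) K)))
    (φ : Polynomial ↥v.valuationSubring) (hφmonic : φ.Monic)
    (hφirr : Irreducible (φ.map (IsLocalRing.residue ↥v.valuationSubring)))
    (l : ℕ) (hl : 2 ≤ l)
    (hfbar : f.map (IsLocalRing.residue ↥v.valuationSubring) =
      (φ.map (IsLocalRing.residue ↥v.valuationSubring)) ^ l)
    (α : L) (hαroot : Polynomial.aeval α f = 0)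
    (hαgen : Algebra.adjoin K {α} = ⊤)
    {Γ' : Type*} [LinearOrderedCommGroupWithZero Γ'] (ω : Valuation L Γ')
    (hω : (ω.comap (algebraMap K L)).IsEquiv v)
    (hIC : Algebra.adjoin (↥v.valuationSubring) {α} =
      integralClosure (↥v.valuationSubring) L) :
    ∃ a : K, IsMinPosValue v (v a) ∧
      ω (Polynomial.aeval α φ) ^ l = ω (algebraMap K L a) :=
  stmt_7_general v f hfmonic hfirr φ hφirr l hl hfbar α hαroot hαgen ω hω hIC
end

section
/- Suppose the set Γ_ν^+ of positive elements of the value group has a smallest element σ, and let ω be a valuation of L extending ν such that ω(φ_i(α)) = σ/l_i for some i ∈ {1, …, r}. Then l_i divides the ramification index e(ω/ν) = [Γ_ω : Γ_ν], and deg(φ_i) divides the residue degree f(ω/ν) = [k_ω : k_ν]; in particular, the residue field k_ω contains a subfield isomorphic to k_ν[x]/(φ̄_i). -/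
open Polynomial

section Helpers

variable {K L : Type*} [Field K] [Field L] [Algebra K L]
variable {Γ₀ : Type*} [LinearOrderedCommGroupWithZero Γ₀]

/-- The inclusion of the valuation ring of `v` into a valuation subring of `L` lying over it. -/
def liftHom (v : Valuation K Γ₀) (O : ValuationSubring L)
    (hO : O.comap (algebraMap K L) = v.valuationSubring) :
    ↥v.valuationSubring →+* ↥O where
  toFun x := ⟨algebraMap K L x.1, by
    have hx : (x : K) ∈ O.comap (algebraMap K L) := by rw [hO]; exact x.2
    exact hx⟩
  map_one' := by ext; simp
  map_mul' x y := by ext; simp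
  map_zero' := by ext; simp
  map_add' x y := by ext; simp

theorem isLocalHom_liftHom (v : Valuation K Γ₀) (O : ValuationSubring L)
    (hO : O.comap (algebraMap K L) = v.valuationSubring) :
    IsLocalHom (liftHom v O hO) := by
  constructor
  intro x hx
  rcases hx with ⟨u, hu⟩
  have huL : ((u : ↥O) : L) = algebraMap K L (x : K) := by rw [hu]; rfl
  have hx0 : (x : K) ≠ 0 := by
    intro h0
    apply u.ne_zero
    ext
    rw [huL, h0, map_zero]
    rfl
  have hyL : (((u⁻¹ : (↥O)ˣ) : ↥O) : L) = algebraMap K L ((x : K)⁻¹) := by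
    have h1 : ((u : ↥O) * ((u⁻¹ : (↥O)ˣ) : ↥O)) = 1 := u.mul_inv
    have h2 : ((u : ↥O) : L) * (((u⁻¹ : (↥O)ˣ) : ↥O) : L) = 1 := by
      exact_mod_cast congrArg (fun z : ↥O => (z : L)) h1
    rw [huL] at h2
    rw [map_inv₀]
    exact eq_inv_of_mul_eq_one_right h2
  have hinvmem : (x : K)⁻¹ ∈ v.valuationSubring := by
    have hmem : algebraMap K L ((x : K)⁻¹) ∈ O := by
      rw [← hyL]; exact ((u⁻¹ : (↥O)ˣ) : ↥O).2
    have h3 : (x : K)⁻¹ ∈ O.comap (algebraMap K L) := hmem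
    rw [hO] at h3
    exact h3
  refine isUnit_iff_exists_inv.mpr ⟨⟨(x : K)⁻¹, hinvmem⟩, ?_⟩
  ext
  exact mul_inv_cancel₀ hx0

/-- The ramification index `e(ω/ν) = [Γ_ω : Γ_ν]` of the valuation corresponding to a
valuation subring `O` of `L` over `v`: the index, in the value group of `O`, of the
subgroup generated by the values of elements coming from `K`. -/
noncomputable def ramIdx (v : Valuation K Γ₀) (O : ValuationSubring L) : ℕ :=
  (Subgroup.closure {γ : (O.ValueGroup)ˣ |
      ∃ x : K, (γ : O.ValueGroup) = O.valuation (algebraMap K L x)}).index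

/-- The residue degree `f(ω/ν) = [k_ω : k_ν]` of the valuation corresponding to a
valuation subring `O` of `L` lying over the valuation ring of `v`. -/
noncomputable def resDeg (v : Valuation K Γ₀) (O : ValuationSubring L)
    (hO : O.comap (algebraMap K L) = v.valuationSubring) : ℕ :=
  letI := isLocalHom_liftHom v O hO
  letI : Algebra (IsLocalRing.ResidueField ↥v.valuationSubring) (IsLocalRing.ResidueField ↥O) :=
    (IsLocalRing.ResidueField.map (liftHom v O hO)).toAlgebra
  Module.finrank (IsLocalRing.ResidueField ↥v.valuationSubring) (IsLocalRing.ResidueField ↥O)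

end Helpers

/-! Since `α` is integral over `R_ν`, it lies in the valuation ring of `ω`, and `ω(φᵢ(α)) > 0`
says that its residue is a root of `φ̄ᵢ`; this embeds `k_ν[x]/(φ̄ᵢ)` into `k_ω`, and the tower
law gives `deg φᵢ ∣ f(ω/ν)`. For the ramification index, let `d` be the order of the class of
`ω(φᵢ(α))` in `Γ_ω / Γ_ν` and write `lᵢ = d·k`. Then `d·ω(φᵢ(α)) = ν(x)` for some `x ∈ K`
with `k·ν(x) = σ`, and minimality of `σ` forces `k = 1`, so `lᵢ = d` divides `e(ω/ν)`. -/

theorem Subgroup.dvd_index_of_pow_mem {G : Type*} [CommGroup G] {H : Subgroup G} {g : G} {n : ℕ}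
    (hn : g ^ n ∈ H) (hroot : ∀ y ∈ H, ∀ k : ℕ, y ^ k = g ^ n → k = 1) : n ∣ H.index := by
  set d := orderOf (QuotientGroup.mk g : G ⧸ H)
  have hdn : d ∣ n := orderOf_dvd_of_pow_eq_one <| by
    rw [← QuotientGroup.mk_pow, QuotientGroup.eq_one_iff]; exact hn
  have hgd : g ^ d ∈ H := by
    rw [← QuotientGroup.eq_one_iff, QuotientGroup.mk_pow]; exact pow_orderOf_eq_one _
  obtain ⟨k, rfl⟩ := hdn
  obtain rfl : k = 1 := hroot _ hgd k (pow_mul g d k).symm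
  rw [mul_one, Subgroup.index_eq_card]
  exact _root_.orderOf_dvd_natCard _

theorem Polynomial.Irreducible.natDegree_dvd_finrank_of_aeval_eq_zero {F E : Type*} [Field F]
    [Field E] [Algebra F E] {p : F[X]} (hp : Irreducible p) {x : E} (hx : aeval x p = 0) :
    p.natDegree ∣ Module.finrank F E := by
  rw [minpoly.Irreducible.eq_minpoly hp hx,
    natDegree_C_mul (leadingCoeff_ne_zero.mpr hp.ne_zero)]
  exact minpoly.degree_dvd (IsAlgebraic.isIntegral ⟨p, hp.ne_zero, hx⟩)

section LyingOver

variable {K L Γ₀ : Type*} [Field K] [Field L] [Algebra K L] [LinearOrderedCommGroupWithZero Γ₀]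
  {v : Valuation K Γ₀} {O : ValuationSubring L}

theorem IsMinPosValue.eq_one_of_pow_eq {σ : Γ₀} (hσ : IsMinPosValue v σ) {x : K} {k : ℕ}
    (hk : v x ^ k = σ) : k = 1 := by
  obtain ⟨⟨hσ0, hσ1, -⟩, hmax⟩ := hσ
  have hk0 : k ≠ 0 := by rintro rfl; exact hσ1.ne (by rw [← hk, pow_zero])
  have hx0 : v x ≠ 0 := fun h => hσ0 (by rw [← hk, h, zero_pow hk0])
  have hx1 : v x < 1 := by
    by_contra! h
    exact (one_le_pow₀ h).not_gt (hk ▸ hσ1)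
  have hxσ : v x ≤ σ := hmax ⟨hx0, hx1, x, rfl⟩
  by_contra hk1
  have : v x ^ k < v x := pow_lt_self_of_lt_one₀ (zero_lt_iff.mpr hx0) hx1 (by omega)
  exact (hk ▸ this).not_ge hxσ

theorem ValuationSubring.isEquiv_comap_valuation
    (hO : O.comap (algebraMap K L) = v.valuationSubring) :
    (O.valuation.comap (algebraMap K L)).IsEquiv v :=
  Valuation.isEquiv_of_val_le_one fun x => by
    rw [Valuation.comap_apply, ValuationSubring.valuation_le_one_iff, ← ValuationSubring.mem_comap,
      hO, Valuation.mem_valuationSubring_iff]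

theorem ValuationSubring.exists_eq_valuation_algebraMap_of_mem_closure {γ : O.ValueGroupˣ}
    (hγ : γ ∈ Subgroup.closure
      {γ : O.ValueGroupˣ | ∃ x : K, (γ : O.ValueGroup) = O.valuation (algebraMap K L x)}) :
    ∃ x : K, (γ : O.ValueGroup) = O.valuation (algebraMap K L x) := by
  induction hγ using Subgroup.closure_induction with
  | mem _ h => exact h
  | one => exact ⟨1, by simp⟩
  | mul _ _ _ _ hγ hδ =>
    obtain ⟨x, hx⟩ := hγ
    obtain ⟨y, hy⟩ := hδ
    exact ⟨x * y, by simp [hx, hy]⟩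
  | inv _ _ hγ =>
    obtain ⟨x, hx⟩ := hγ
    exact ⟨x⁻¹, by simp [hx]⟩

theorem dvd_ramIdx (hO : O.comap (algebraMap K L) = v.valuationSubring) {σ : Γ₀}
    (hσ : IsMinPosValue v σ) {a : K} (ha : v a = σ) {t : L} {n : ℕ}
    (hval : O.valuation t ^ n = O.valuation (algebraMap K L a)) : n ∣ ramIdx v O := by
  have hequiv := O.isEquiv_comap_valuation hO
  have ha0 : O.valuation (algebraMap K L a) ≠ 0 := hequiv.eq_zero.not.mpr (ha ▸ hσ.1.1)
  have ha1 : O.valuation (algebraMap K L a) < 1 := hequiv.lt_one_iff_lt_one.mpr (ha ▸ hσ.1.2.1)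
  have ht0 : O.valuation t ≠ 0 := by
    intro ht
    rcases n.eq_zero_or_pos with rfl | hn
    · exact ha1.ne (by rw [← hval, pow_zero])
    · exact ha0 (by rw [← hval, ht, zero_pow hn.ne'])
  refine Subgroup.dvd_index_of_pow_mem (g := Units.mk0 _ ht0)
    (Subgroup.subset_closure ⟨a, by simpa using hval⟩) fun y hy k hk => ?_
  obtain ⟨x, hx⟩ := O.exists_eq_valuation_algebraMap_of_mem_closure hy
  have hxa : O.valuation (algebraMap K L (x ^ k)) = O.valuation (algebraMap K L a) := by
    simpa [hx, hval] using congrArg Units.val hk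
  exact hσ.eq_one_of_pow_eq (by rw [← map_pow, ← ha]; exact hequiv.eq_iff.mp hxa)

noncomputable def residueMap (v : Valuation K Γ₀) (O : ValuationSubring L)
    (hO : O.comap (algebraMap K L) = v.valuationSubring) :
    IsLocalRing.ResidueField v.valuationSubring →+* IsLocalRing.ResidueField O :=
  letI := isLocalHom_liftHom v O hO
  IsLocalRing.ResidueField.map (liftHom v O hO)

theorem residueMap_comp_residue (hO : O.comap (algebraMap K L) = v.valuationSubring) :
    (residueMap v O hO).comp (IsLocalRing.residue v.valuationSubring) =
      (IsLocalRing.residue O).comp (liftHom v O hO) :=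
  letI := isLocalHom_liftHom v O hO
  RingHom.ext (IsLocalRing.ResidueField.map_residue (liftHom v O hO))

theorem natDegree_dvd_resDeg (hO : O.comap (algebraMap K L) = v.valuationSubring)
    {p : v.valuationSubring[X]} (hp : p.Monic)
    (hirr : Irreducible (p.map (IsLocalRing.residue v.valuationSubring)))
    {β : IsLocalRing.ResidueField O}
    (hβ : (p.map (IsLocalRing.residue v.valuationSubring)).eval₂ (residueMap v O hO) β = 0) :
    p.natDegree ∣ resDeg v O hO := by
  let := (residueMap v O hO).toAlgebra
  rw [← hp.natDegree_map (IsLocalRing.residue v.valuationSubring)]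
  exact hirr.natDegree_dvd_finrank_of_aeval_eq_zero hβ

variable [Algebra v.valuationSubring L] [IsScalarTower v.valuationSubring K L]

theorem algebraMap_comp_liftHom (hO : O.comap (algebraMap K L) = v.valuationSubring) :
    (algebraMap O L).comp (liftHom v O hO) = algebraMap v.valuationSubring L := by
  ext x
  exact (IsScalarTower.algebraMap_apply v.valuationSubring K L x).symm

theorem ValuationSubring.mem_of_isIntegral (hO : O.comap (algebraMap K L) = v.valuationSubring)
    {x : L} (hx : IsIntegral v.valuationSubring x) : x ∈ O := by
  have hxO : IsIntegral O x :=
    hx.map_of_comp_eq (liftHom v O hO) (RingHom.id L) (algebraMap_comp_liftHom hO)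
  obtain ⟨y, rfl⟩ := IsIntegrallyClosed.isIntegral_iff.mp hxO
  exact y.2

theorem coe_eval₂_liftHom (hO : O.comap (algebraMap K L) = v.valuationSubring)
    (p : v.valuationSubring[X]) {x : L} (hx : x ∈ O) :
    ((p.eval₂ (liftHom v O hO) ⟨x, hx⟩ : O) : L) = aeval x p := by
  rw [← ValuationSubring.algebraMap_apply, hom_eval₂, algebraMap_comp_liftHom]
  rfl

theorem eval₂_residueMap_eq_zero_iff (hO : O.comap (algebraMap K L) = v.valuationSubring)
    (p : v.valuationSubring[X]) {x : L} (hx : x ∈ O) :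
    (p.map (IsLocalRing.residue v.valuationSubring)).eval₂ (residueMap v O hO)
        (IsLocalRing.residue O ⟨x, hx⟩) = 0 ↔ O.valuation (aeval x p) < 1 := by
  rw [eval₂_map, residueMap_comp_residue, ← hom_eval₂, IsLocalRing.residue_eq_zero_iff,
    ValuationSubring.valuation_lt_one_iff, coe_eval₂_liftHom]

end LyingOver

theorem stmt_15_general
    {K L : Type*} [Field K] [Field L] [Algebra K L]
    {Γ₀ : Type*} [LinearOrderedCommGroupWithZero Γ₀]
    (v : Valuation K Γ₀)
    [Algebra ↥v.valuationSubring L] [IsScalarTower (↥v.valuationSubring) K L]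
    (f : Polynomial ↥v.valuationSubring) (hfmonic : f.Monic)
    (α : L) (hαroot : Polynomial.aeval α f = 0)
    (r : ℕ) (l : Fin r → ℕ)
    (φ : Fin r → Polynomial ↥v.valuationSubring)
    (hφmonic : ∀ i, (φ i).Monic)
    (hφirr : ∀ i, Irreducible ((φ i).map (IsLocalRing.residue ↥v.valuationSubring)))
    (σ : Γ₀) (hσ : IsMinPosValue v σ)
    (i : Fin r)
    (O : ValuationSubring L) (hO : O.comap (algebraMap K L) = v.valuationSubring)
    (a : K) (ha : v a = σ)
    (hval : O.valuation (Polynomial.aeval α (φ i)) ^ (l i) =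
      O.valuation (algebraMap K L a)) :
    (l i) ∣ ramIdx v O ∧
    (φ i).natDegree ∣ resDeg v O hO ∧
    Nonempty ((Polynomial (IsLocalRing.ResidueField ↥v.valuationSubring) ⧸
        Ideal.span {(φ i).map (IsLocalRing.residue ↥v.valuationSubring)}) →+*
      IsLocalRing.ResidueField ↥O) := by
  have hα : α ∈ O := O.mem_of_isIntegral hO ⟨f, hfmonic, hαroot⟩
  have ha1 : O.valuation (algebraMap K L a) < 1 :=
    (O.isEquiv_comap_valuation hO).lt_one_iff_lt_one.mpr (ha ▸ hσ.1.2.1)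
  have hφα : O.valuation (aeval α (φ i)) < 1 := by
    by_contra! h
    exact (one_le_pow₀ (n := l i) h).not_gt (hval ▸ ha1)
  have hβ := (eval₂_residueMap_eq_zero_iff hO (φ i) hα).mpr hφα
  exact ⟨dvd_ramIdx hO hσ ha hval, natDegree_dvd_resDeg hO (hφmonic i) (hφirr i) hβ,
    ⟨AdjoinRoot.lift _ _ hβ⟩⟩

/-- **Divisibility of ramification index and residue degree (from the Remark)**: if
`Γ_ν⁺` has a smallest element `σ` and `ω` is a valuation of `L` extending `ν` with
`ω(φᵢ(α)) = σ/lᵢ` (multiplicatively: `ω(φᵢ(α))^lᵢ` equals the image of `σ = ν(a)`),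
then `lᵢ` divides `e(ω/ν) = [Γ_ω : Γ_ν]` and `deg φᵢ` divides `f(ω/ν) = [k_ω : k_ν]`;
in particular `k_ω` contains a subfield isomorphic to `k_ν[x]/(φ̄ᵢ)` (there is a ring
homomorphism — necessarily injective — from `k_ν[x]/(φ̄ᵢ)` into `k_ω`). -/
theorem stmt_15
    {K L : Type*} [Field K] [Field L] [Algebra K L]
    {Γ₀ : Type*} [LinearOrderedCommGroupWithZero Γ₀]
    (v : Valuation K Γ₀)
    [Algebra ↥v.valuationSubring L] [IsScalarTower (↥v.valuationSubring) K L]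
    (f : Polynomial ↥v.valuationSubring) (hfmonic : f.Monic)
    (hfirr : Irreducible (f.map (algebraMap (↥v.valuationSubring) K)))
    (α : L) (hαroot : Polynomial.aeval α f = 0)
    (hαgen : Algebra.adjoin K {α} = ⊤)
    (r : ℕ) (l : Fin r → ℕ) (hl : ∀ i, 1 ≤ l i)
    (φ : Fin r → Polynomial ↥v.valuationSubring)
    (hφmonic : ∀ i, (φ i).Monic)
    (hφirr : ∀ i, Irreducible ((φ i).map (IsLocalRing.residue ↥v.valuationSubring)))
    (hφdist : ∀ i j, i ≠ j →
      (φ i).map (IsLocalRing.residue ↥v.valuationSubring) ≠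
        (φ j).map (IsLocalRing.residue ↥v.valuationSubring))
    (hfbar : f.map (IsLocalRing.residue ↥v.valuationSubring) =
      ∏ i, ((φ i).map (IsLocalRing.residue ↥v.valuationSubring)) ^ (l i))
    (σ : Γ₀) (hσ : IsMinPosValue v σ)
    (i : Fin r)
    (O : ValuationSubring L) (hO : O.comap (algebraMap K L) = v.valuationSubring)
    (a : K) (ha : v a = σ)
    (hval : O.valuation (Polynomial.aeval α (φ i)) ^ (l i) =
      O.valuation (algebraMap K L a)) :
    (l i) ∣ ramIdx v O ∧
    (φ i).natDegree ∣ resDeg v O hO ∧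
    Nonempty ((Polynomial (IsLocalRing.ResidueField ↥v.valuationSubring) ⧸
        Ideal.span {(φ i).map (IsLocalRing.residue ↥v.valuationSubring)}) →+*
      IsLocalRing.ResidueField ↥O) :=
  stmt_15_general v f hfmonic α hαroot r l φ hφmonic hφirr σ hσ i O hO a ha hval
end
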